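/- arXiv:1311.0244 — 5 statements merged into one kernel-verified Lean document; each statement's English description precedes it below -/
import Mathlib

section
/- Let G be a connected undirected graph in which every node has degree at least k. Then G has at least k+1 noncritical nodes, i.e., at least k+1 vertices whose removal (together with their incident edges) leaves a connected graph. -/
/-!
The components of `G - c` are the components of `G.deleteIncidenceSet c` other than `{c}`.
Each has at least `k` vertices, because a vertex of a component `A` has all its neighbours in
`A ∪ {c}`. If some `a ∈ A` is a cut vertex, the components of `G - a` avoiding `c` lie in `A`
(a vertex outside `A` reaches `c` without passing through `a`), and they miss `a`; so a component
minimal under inclusion consists of noncritical vertices. Hence, if `G` has a cut vertex, each of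
the two components it leaves contains `k` noncritical vertices, and `2k ≥ k + 1`. Otherwise every
vertex is noncritical, and there are more than `k` of them.
-/

/-- A vertex is *noncritical* if deleting it (and its incident edges)
leaves a connected graph. -/
def Noncritical {V : Type*} (G : SimpleGraph V) (v : V) : Prop :=
  (G.induce ({v}ᶜ : Set V)).Connected

open SimpleGraph

section

variable {V : Type*} {G : SimpleGraph V}

lemma eq_of_reachable_deleteIncidenceSet_self {a w : V}
    (h : (G.deleteIncidenceSet a).Reachable a w) : w = a := by
  obtain ⟨p⟩ := h
  cases p with
  | nil => rfl
  | cons hadj _ => exact absurd rfl (deleteIncidenceSet_adj.mp hadj).2.1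

lemma notMem_supp_connectedComponentMk_deleteIncidenceSet {a w : V} (hw : w ≠ a) :
    a ∉ ((G.deleteIncidenceSet a).connectedComponentMk w).supp := fun ha =>
  hw (eq_of_reachable_deleteIncidenceSet_self (ConnectedComponent.exact ha))

lemma exists_not_reachable_of_not_noncritical {a v : V} (hcut : ¬ Noncritical G a)
    (hv : v ≠ a) : ∃ w, w ≠ a ∧ ¬ (G.deleteIncidenceSet a).Reachable v w := by
  classical
  by_contra! h
  apply hcut
  rw [Noncritical, ← induce_deleteIncidenceSet_of_notMem G (x := a) (s := {a}ᶜ) (by simp),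
    connected_iff_exists_forall_reachable]
  refine ⟨⟨v, hv⟩, fun ⟨w, hw⟩ => ?_⟩
  obtain ⟨p⟩ := h w hw
  have hsupp : ∀ x ∈ p.support, x ∈ ({a}ᶜ : Set V) := by
    intro x hx (hxa : x = a)
    rw [hxa] at hx
    exact hv (eq_of_reachable_deleteIncidenceSet_self (p.takeUntil a hx).reachable.symm)
  exact (p.induce _ hsupp).reachable

variable {c : V} {C : (G.deleteIncidenceSet c).ConnectedComponent}

lemma le_ncard_supp_of_le_degree [Fintype V] [DecidableRel G.Adj] {k : ℕ}
    (hdeg : ∀ v, k ≤ G.degree v) (hc : c ∉ C.supp) : k ≤ C.supp.ncard := by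
  obtain ⟨a, ha⟩ := C.nonempty_supp
  have hac : a ≠ c := ne_of_mem_of_not_mem ha hc
  have hnbr : G.neighborSet a ⊆ insert c C.supp \ {a} := by
    intro y (hay : G.Adj a y)
    refine ⟨?_, hay.ne.symm⟩
    by_cases hyc : y = c
    · exact Or.inl hyc
    · exact Or.inr (C.mem_supp_of_adj_mem_supp ha (deleteIncidenceSet_adj.mpr ⟨hay, hac, hyc⟩))
  calc k ≤ G.degree a := hdeg a
    _ = (G.neighborSet a).ncard := by
      rw [← Nat.card_coe_set_eq, Nat.card_eq_fintype_card, card_neighborSet_eq_degree]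
    _ ≤ (insert c C.supp \ {a}).ncard := Set.ncard_le_ncard hnbr
    _ = C.supp.ncard := by
      rw [Set.ncard_sdiff_singleton_of_mem (Set.mem_insert_of_mem c ha),
        Set.ncard_insert_of_notMem hc, Nat.add_sub_cancel]

/-- Follow a walk from `w` to `a`: it has to pass through `c` before entering `C`. -/
lemma reachable_deleteIncidenceSet_of_notMem_supp (hconn : G.Connected) (hc : c ∉ C.supp)
    {a w : V} (ha : a ∈ C.supp) (hw : w ∉ C.supp) : (G.deleteIncidenceSet a).Reachable w c := by
  obtain ⟨p⟩ := hconn.preconnected w a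
  induction p with
  | nil => exact absurd ha hw
  | @cons w u a hwu _ ih =>
    by_cases hwc : w = c
    · exact hwc ▸ Reachable.refl _
    have hu : u ∉ C.supp := fun hu => hw <| C.mem_supp_of_adj_mem_supp hu <|
      deleteIncidenceSet_adj.mpr ⟨hwu.symm, ne_of_mem_of_not_mem hu hc, hwc⟩
    have hwu' : (G.deleteIncidenceSet a).Adj w u :=
      deleteIncidenceSet_adj.mpr ⟨hwu, (ne_of_mem_of_not_mem ha hw).symm,
      (ne_of_mem_of_not_mem ha hu).symm⟩
    exact hwu'.reachable.trans (ih ha hu)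

lemma exists_supp_ssubset_of_not_noncritical (hconn : G.Connected) (hc : c ∉ C.supp) {a : V}
    (ha : a ∈ C.supp) (hcut : ¬ Noncritical G a) :
    ∃ D : (G.deleteIncidenceSet a).ConnectedComponent, a ∉ D.supp ∧ D.supp ⊂ C.supp := by
  obtain ⟨w, hwa, hcw⟩ :=
    exists_not_reachable_of_not_noncritical hcut (ne_of_mem_of_not_mem ha hc).symm
  have haD := notMem_supp_connectedComponentMk_deleteIncidenceSet (G := G) hwa
  refine ⟨_, haD, LE.le.ssubset_of_mem_notMem (fun v hv => ?_) ha haD⟩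
  by_contra hvC
  exact hcw ((reachable_deleteIncidenceSet_of_notMem_supp hconn hc ha hvC).symm.trans
    (ConnectedComponent.exact hv))

lemma exists_supp_subset_forall_noncritical [Finite V] (hconn : G.Connected) (hc : c ∉ C.supp) :
    ∃ (a : V) (D : (G.deleteIncidenceSet a).ConnectedComponent),
      a ∉ D.supp ∧ D.supp ⊆ C.supp ∧ ∀ v ∈ D.supp, Noncritical G v := by
  induction hn : C.supp.ncard using Nat.strong_induction_on generalizing c with
  | _ n ih =>
    by_cases hC : ∀ v ∈ C.supp, Noncritical G v
    · exact ⟨c, C, hc, subset_rfl, hC⟩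
    push Not at hC
    obtain ⟨a, ha, hcut⟩ := hC
    obtain ⟨D, haD, hDC⟩ := exists_supp_ssubset_of_not_noncritical hconn hc ha hcut
    obtain ⟨b, E, hbE, hED, hE⟩ :=
      ih _ (hn ▸ Set.ncard_lt_ncard hDC (Set.toFinite _)) haD rfl
    exact ⟨b, E, hbE, hED.trans hDC.subset, hE⟩

lemma le_ncard_noncritical_inter_supp [Fintype V] [DecidableRel G.Adj] {k : ℕ}
    (hconn : G.Connected) (hdeg : ∀ v, k ≤ G.degree v) (hc : c ∉ C.supp) :
    k ≤ ({v | Noncritical G v} ∩ C.supp).ncard := by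
  obtain ⟨a, D, haD, hDC, hD⟩ := exists_supp_subset_forall_noncritical hconn hc
  exact (le_ncard_supp_of_le_degree hdeg haD).trans
    (Set.ncard_le_ncard fun v hv => ⟨hD v hv, hDC hv⟩)

end

theorem noncritical_count_general {V : Type*} [Fintype V]
    (G : SimpleGraph V) [DecidableRel G.Adj] (k : ℕ)
    (hconn : G.Connected) (hk : 1 ≤ k)
    (hdeg : ∀ v : V, k ≤ G.degree v) :
    k + 1 ≤ {v : V | Noncritical G v}.ncard := by
  obtain ⟨v₀⟩ := hconn.nonempty
  have hcard : k + 1 ≤ Fintype.card V := (hdeg v₀).trans_lt (G.degree_lt_card_verts v₀)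
  by_cases hall : ∀ v, Noncritical G v
  · simp [hall, hcard]
  push Not at hall
  obtain ⟨c, hcut⟩ := hall
  have : Nontrivial V := Fintype.one_lt_card_iff_nontrivial.mp (by omega)
  obtain ⟨x, hxc⟩ := exists_ne c
  obtain ⟨y, hyc, hxy⟩ := exists_not_reachable_of_not_noncritical hcut hxc
  set N := {v : V | Noncritical G v}
  set Cx := (G.deleteIncidenceSet c).connectedComponentMk x
  set Cy := (G.deleteIncidenceSet c).connectedComponentMk y
  have hdisj : Disjoint (N ∩ Cx.supp) (N ∩ Cy.supp) :=
    ((G.deleteIncidenceSet c).pairwise_disjoint_supp_connectedComponent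
      (ConnectedComponent.eq.not.mpr hxy)).mono Set.inter_subset_right Set.inter_subset_right
  calc k + 1 ≤ k + k := by omega
    _ ≤ (N ∩ Cx.supp).ncard + (N ∩ Cy.supp).ncard := add_le_add
        (le_ncard_noncritical_inter_supp hconn hdeg
          (notMem_supp_connectedComponentMk_deleteIncidenceSet hxc))
        (le_ncard_noncritical_inter_supp hconn hdeg
          (notMem_supp_connectedComponentMk_deleteIncidenceSet hyc))
    _ = (N ∩ Cx.supp ∪ N ∩ Cy.supp).ncard := (Set.ncard_union_eq hdisj).symm
    _ ≤ N.ncard :=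
      Set.ncard_le_ncard (Set.union_subset Set.inter_subset_left Set.inter_subset_left)

theorem noncritical_count {V : Type*} [Fintype V] [DecidableEq V]
    (G : SimpleGraph V) [DecidableRel G.Adj] (k : ℕ)
    (hconn : G.Connected) (hk : 1 ≤ k)
    (hdeg : ∀ v : V, k ≤ G.degree v) :
    k + 1 ≤ {v : V | Noncritical G v}.ncard :=
  noncritical_count_general G k hconn hk hdeg
end

section
/- In a finite connected undirected graph, every maximal simple path ends at a noncritical vertex. That is, if p = (p_0, p_1, ..., p_k) is a simple path such that every neighbor of p_k lies in {p_0, ..., p_k}, then removing p_k and its incident edges leaves the graph connected. -/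
/-!
Every neighbour of `b` lies on `p` before `b`, and that part of `p` is a path avoiding `b`, so all
neighbours of `b` lie in one component of `G - b`. Every vertex of `G - b` reaches a neighbour of
`b` inside `G - b`: follow a path to `b` and stop one step early. Hence `G - b` is connected.
-/

open SimpleGraph Walk

namespace SimpleGraph

variable {V : Type*} {G : SimpleGraph V}

lemma Walk.IsPath.start_notMem_support_tail {u v : V} {p : G.Walk u v} (hp : p.IsPath)
    (hnil : ¬p.Nil) : u ∉ p.tail.support := by
  have h := hp.support_nodup
  rw [← cons_support_tail hnil] at h
  exact (List.nodup_cons.mp h).1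

lemma Preconnected.exists_adj_reachable_induce_compl_singleton (hG : G.Preconnected) {b u : V}
    (hu : u ≠ b) :
    ∃ w, ∃ hw : w ≠ b, G.Adj b w ∧ (G.induce {b}ᶜ).Reachable ⟨u, hu⟩ ⟨w, hw⟩ := by
  obtain ⟨q, hq⟩ := hG.exists_isPath b u
  have hnil : ¬q.Nil := not_nil_of_ne hu.symm
  have hb : ∀ x ∈ q.tail.reverse.support, x ∈ ({b}ᶜ : Set V) := by
    rintro x hx rfl
    rw [support_reverse, List.mem_reverse] at hx
    exact hq.start_notMem_support_tail hnil hx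
  exact ⟨q.snd, hb _ q.tail.reverse.end_mem_support, q.adj_snd hnil,
    (q.tail.reverse.induce _ hb).reachable⟩

lemma Preconnected.induce_compl_singleton_of_neighborSet_subset (hG : G.Preconnected) {b : V}
    {s : Set V} (hbs : b ∉ s) (hs : (G.induce s).Preconnected) (hnbr : G.neighborSet b ⊆ s) :
    (G.induce {b}ᶜ).Preconnected := by
  have hsub : s ⊆ {b}ᶜ := fun x hx hxb => hbs (hxb ▸ hx)
  have reach_s : ∀ u (hu : u ≠ b), ∃ w, ∃ hw : w ∈ s,
      (G.induce {b}ᶜ).Reachable ⟨u, hu⟩ ⟨w, hsub hw⟩ := fun u hu => by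
    obtain ⟨w, _, hbw, hr⟩ := hG.exists_adj_reachable_induce_compl_singleton hu
    exact ⟨w, hnbr hbw, hr⟩
  rintro ⟨u, hu⟩ ⟨v, hv⟩
  obtain ⟨x, hx, hux⟩ := reach_s u hu
  obtain ⟨y, hy, hvy⟩ := reach_s v hv
  exact hux.trans (((hs ⟨x, hx⟩ ⟨y, hy⟩).map (G.induceHomOfLE hsub).toHom).trans hvy.symm)

end SimpleGraph

theorem maximal_simple_path_ends_noncritical {V : Type*} [Fintype V]
    (G : SimpleGraph V) (hconn : G.Connected) (hcard : 2 ≤ Fintype.card V)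
    (a b : V) (p : G.Walk a b) (hpath : p.IsPath)
    (hmax : ∀ w : V, G.Adj b w → w ∈ p.support) :
    (G.induce ({b}ᶜ : Set V)).Connected := by
  have : Nontrivial V := Fintype.one_lt_card_iff_nontrivial.mp hcard
  obtain ⟨u, hu⟩ := exists_ne b
  obtain ⟨w, hw, hbw, -⟩ := hconn.preconnected.exists_adj_reachable_induce_compl_singleton hu
  have hnil : ¬p.reverse.Nil := by
    intro h
    have hp : p.Nil := nil_reverse.mp h
    have hwb := hmax w hbw
    rw [nil_iff_support_eq.mp hp, List.mem_singleton] at hwb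
    exact hw (hwb.trans hp.eq)
  set q := p.reverse.tail
  have hnbr : G.neighborSet b ⊆ {x | x ∈ q.support} := by
    intro x hbx
    have hx : x ∈ p.reverse.support := by simpa using hmax x hbx
    rw [← cons_support_tail hnil] at hx
    exact (List.mem_cons.mp hx).resolve_left (G.ne_of_adj hbx).symm
  have hpre := hconn.preconnected.induce_compl_singleton_of_neighborSet_subset
    (hpath.reverse.start_notMem_support_tail hnil) q.connected_induce_support.preconnected hnbr
  exact (connected_iff _).mpr ⟨hpre, ⟨⟨w, hw⟩⟩⟩
end

section
/- If v is a δ-hop noncritical vertex of a connected graph G, then v is noncritical in G: the removal of v and its incident edges leaves G connected. -/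
/-!
Every vertex `u ≠ v` reaches some neighbour of `v` without passing through `v`: follow a walk
from `u` to `v` and stop just before its first visit to `v`. All neighbours of `v` lie in the
δ-neighbourhood of `v` (as `δ ≥ 1`), which stays connected after deleting `v`, so any two of them
are joined in `G - v`.
-/

/-- `v` is δ-hop noncritical: the subgraph induced on the δ-neighborhood
of `v`, with `v` removed, is connected. -/
def DeltaNoncritical {V : Type*} (G : SimpleGraph V) (δ : ℕ) (v : V) : Prop :=
  (G.induce ({u : V | G.dist v u ≤ δ} \ {v})).Connected

namespace SimpleGraph

variable {V : Type*} {G : SimpleGraph V} {u v : V}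

theorem Walk.exists_adj_reachable_induce_compl_singleton (p : G.Walk u v) (hu : u ≠ v) :
    ∃ w, ∃ hw : G.Adj v w, (G.induce {v}ᶜ).Reachable ⟨u, hu⟩ ⟨w, hw.ne'⟩ := by
  induction p with
  | nil => exact absurd rfl hu
  | @cons u c t huc q ih =>
    by_cases hc : c = t
    · subst hc
      exact ⟨u, huc.symm, .rfl⟩
    · obtain ⟨w, hw, hcw⟩ := ih hc
      have huc' : (G.induce {t}ᶜ).Adj ⟨u, hu⟩ ⟨c, hc⟩ := huc
      exact ⟨w, hw, huc'.reachable.trans hcw⟩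

theorem Preconnected.induce_compl_singleton (hG : G.Preconnected) {s : Set V}
    (hs : s ⊆ {v}ᶜ) (hN : G.neighborSet v ⊆ s) (hsc : (G.induce s).Preconnected) :
    (G.induce {v}ᶜ).Preconnected := by
  have hneighbors : ∀ x y (hx : G.Adj v x) (hy : G.Adj v y),
      (G.induce {v}ᶜ).Reachable ⟨x, hx.ne'⟩ ⟨y, hy.ne'⟩ := fun x y hx hy ↦
    (hsc ⟨x, hN hx⟩ ⟨y, hN hy⟩).map (G.induceHomOfLE hs).toHom
  rintro ⟨a, ha⟩ ⟨b, hb⟩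
  obtain ⟨x, hx, hax⟩ := (hG a v).some.exists_adj_reachable_induce_compl_singleton ha
  obtain ⟨y, hy, hby⟩ := (hG b v).some.exists_adj_reachable_induce_compl_singleton hb
  exact hax.trans ((hneighbors x y hx hy).trans hby.symm)

end SimpleGraph

theorem deltaNoncritical_imp_noncritical_general {V : Type*}
    (G : SimpleGraph V) (hconn : G.Connected) (δ : ℕ) (hδ : 1 ≤ δ)
    (v : V) (h : DeltaNoncritical G δ v) :
    (G.induce ({v}ᶜ : Set V)).Connected := by
  have hsub : {u : V | G.dist v u ≤ δ} \ {v} ⊆ ({v}ᶜ : Set V) := fun _ hu ↦ hu.2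
  have hneighbors : G.neighborSet v ⊆ {u : V | G.dist v u ≤ δ} \ {v} := fun u hu ↦
    ⟨(SimpleGraph.dist_eq_one_iff_adj.mpr hu).le.trans hδ, (G.ne_of_adj hu).symm⟩
  obtain ⟨u⟩ := h.nonempty
  have : Nonempty ({v}ᶜ : Set V) := ⟨Set.inclusion hsub u⟩
  exact ⟨hconn.preconnected.induce_compl_singleton hsub hneighbors h.preconnected⟩

theorem deltaNoncritical_imp_noncritical {V : Type*} [Fintype V]
    (G : SimpleGraph V) (hconn : G.Connected) (δ : ℕ) (hδ : 1 ≤ δ)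
    (v : V) (h : DeltaNoncritical G δ v) :
    (G.induce ({v}ᶜ : Set V)).Connected :=
  deltaNoncritical_imp_noncritical_general G hconn δ hδ v h
end

section
/- Let c_max be the length of the longest chordless cycle in a finite connected graph G, and suppose δ ≥ c_max / 2. Then every δ-hop critical vertex of G is a cut vertex of G. Equivalently, every noncritical vertex of G is δ-hop noncritical. -/
/-- A cycle is chordless if any two of its vertices that are adjacent in `G`
are joined by an edge of the cycle itself. -/
def IsChordlessCycle {V : Type*} (G : SimpleGraph V) {v : V} (c : G.Walk v v) : Prop :=
  c.IsCycle ∧ ∀ x y : V, x ∈ c.support → y ∈ c.support → G.Adj x y →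
    s(x, y) ∈ c.edges

/-! Let `B = N^δ(v) \ {v}`. Every `u ∈ B` is joined inside `B` to a neighbour of `v` by the tail
of a shortest `v`–`u` path. Two neighbours of `v` are joined in `G - v` by a path, which may be
taken chordless; cut it at its interior neighbours of `v`. Each piece, whose only neighbours of `v`
are its ends, closes up through `v` into a chordless cycle of length at most `c_max ≤ 2δ`, so
every vertex on it is within `δ` of `v` along one of the two arcs. -/

namespace SimpleGraph.Walk

variable {V : Type*} {G : SimpleGraph V}

theorem exists_length_lt_of_not_isChordless {u w : V} {p : G.Walk u w} (h : ¬p.IsChordless) :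
    ∃ q : G.Walk u w, q.length < p.length ∧ q.support ⊆ p.support := by
  rw [isChordless_iff_forall_mem_edges] at h
  push Not at h
  obtain ⟨x, y, hx, hy, hxy, hne⟩ := h
  obtain ⟨i, rfl, hi⟩ := mem_support_iff_exists_getVert.mp hx
  obtain ⟨j, rfl, hj⟩ := mem_support_iff_exists_getVert.mp hy
  clear hx hy
  wlog hij : i ≤ j generalizing i j
  · exact this j hj i hi hxy.symm (by rwa [Sym2.eq_swap]) (by omega)
  have hj_ne_succ : j ≠ i + 1 := by
    rintro rfl
    exact hne (p.mk_mem_edges_iff_exists.mpr ⟨i, by omega, rfl⟩)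
  have hj_ne : j ≠ i := by
    rintro rfl
    exact hxy.ne rfl
  refine ⟨(p.take i).append (cons hxy (p.drop j)), ?_, ?_⟩
  · simp only [length_append, length_cons, take_length, drop_length]
    omega
  · intro z hz
    simp only [support_append, support_cons, List.tail_cons, support_take,
      drop_support_eq_support_drop_min, List.mem_append] at hz
    rcases hz with hz | hz
    · exact List.take_subset _ _ hz
    · exact List.drop_subset _ _ hz

theorem exists_isPath_isChordless [DecidableEq V] {u w : V} (p : G.Walk u w) :
    ∃ q : G.Walk u w,
      q.IsPath ∧ q.IsChordless ∧ q.length ≤ p.length ∧ q.support ⊆ p.support := by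
  induction hn : p.length using Nat.strong_induction_on generalizing p with
  | _ n ih =>
  by_cases hc : p.bypass.IsChordless
  · exact ⟨p.bypass, p.bypass_isPath, hc, hn ▸ p.length_bypass_le_length,
      p.support_bypass_subset_support⟩
  obtain ⟨q, hlt, hsub⟩ := exists_length_lt_of_not_isChordless hc
  obtain ⟨r, hr, hrc, hrq, hsub'⟩ :=
    ih q.length (hn ▸ hlt.trans_le p.length_bypass_le_length) q rfl
  exact ⟨r, hr, hrc, hn ▸ (hrq.trans hlt.le).trans p.length_bypass_le_length,
    List.Subset.trans hsub' (List.Subset.trans hsub p.support_bypass_subset_support)⟩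

theorem two_mul_dist_le_length {v z : V} (c : G.Walk v v) (hz : z ∈ c.support) :
    2 * G.dist v z ≤ c.length := by
  classical
  have h₁ := dist_le (c.takeUntil z hz)
  have h₂ := dist_le (c.dropUntil z hz)
  have := congrArg length (c.take_spec hz)
  rw [length_append] at this
  rw [G.dist_comm] at h₂
  omega

theorem IsPath.isCycle_cons_concat {a b v : V} {p : G.Walk a b} (hp : p.IsPath) (hab : a ≠ b)
    (hv : v ∉ p.support) (ha : G.Adj v a) (hb : G.Adj b v) : (cons ha (p.concat hb)).IsCycle := by
  refine (cons_isCycle_iff _ _).mpr ⟨hp.concat hv hb, ?_⟩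
  simp only [edges_concat, List.concat_eq_append, List.mem_append, List.mem_singleton,
    Sym2.eq_iff, not_or]
  exact ⟨fun h => hv (p.fst_mem_support_of_mem_edges h), fun h => ha.ne' h.2, fun h => hab h.2⟩

theorem IsChordless.cons_concat {a b v : V} {p : G.Walk a b} (hp : p.IsChordless)
    (ha : G.Adj v a) (hb : G.Adj b v) (hnbr : ∀ x ∈ p.support, G.Adj v x → x = a ∨ x = b) :
    (cons ha (p.concat hb)).IsChordless := by
  rw [isChordless_iff_forall_mem_edges] at hp ⊢
  simp only [support_cons, support_concat, edges_cons, edges_concat, List.concat_eq_append,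
    List.mem_cons, List.mem_append, List.not_mem_nil, or_false]
  intro x y hx hy hxy
  replace hx : x = v ∨ x ∈ p.support := by tauto
  replace hy : y = v ∨ y ∈ p.support := by tauto
  have hnbr' : ∀ z ∈ p.support, G.Adj v z → s(v, z) = s(v, a) ∨ s(v, z) = s(b, v) := by
    intro z hz hvz
    rcases hnbr z hz hvz with rfl | rfl
    exacts [.inl rfl, .inr Sym2.eq_swap]
  obtain rfl | hx := hx <;> obtain rfl | hy := hy
  · exact absurd rfl hxy.ne
  · have := hnbr' y hy hxy
    tauto
  · have := hnbr' x hx hxy.symm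
    rw [Sym2.eq_swap]
    tauto
  · exact .inr (.inl (hp hx hy hxy))

end SimpleGraph.Walk

namespace SimpleGraph

variable {V : Type*} {G : SimpleGraph V} {v : V} {δ : ℕ}

def puncturedBall (G : SimpleGraph V) (v : V) (δ : ℕ) : Set V :=
  {u | G.dist v u ≤ δ} \ {v}

theorem mem_puncturedBall_of_adj (hδ : 1 ≤ δ) {a : V} (h : G.Adj v a) :
    a ∈ G.puncturedBall v δ :=
  ⟨(dist_eq_one_iff_adj.mpr h).le.trans hδ, h.ne'⟩

theorem Reachable.exists_walk_of_induce {s : Set V} {a b : s} (h : (G.induce s).Reachable a b) :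
    ∃ W : G.Walk a b, ∀ z ∈ W.support, z ∈ s := by
  obtain ⟨W⟩ := h
  refine ⟨W.map (Embedding.induce s).toHom, fun z hz => ?_⟩
  obtain ⟨z', -, rfl⟩ := List.mem_map.mp (Walk.support_map _ W ▸ hz)
  exact z'.2

theorem Connected.exists_adj_reachable_induce_puncturedBall (hconn : G.Connected) {u : V}
    (hu : u ∈ G.puncturedBall v δ) :
    ∃ a : G.puncturedBall v δ,
      G.Adj v a ∧ (G.induce (G.puncturedBall v δ)).Reachable a ⟨u, hu⟩ := by
  classical
  obtain ⟨W, hW, hlen⟩ := hconn.exists_path_of_dist v u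
  cases W with
  | nil => exact absurd rfl hu.2
  | @cons _ a _ hva P =>
    have hvP : v ∉ P.support := ((Walk.cons_isPath_iff _ _).mp hW).2
    have hmem : ∀ z ∈ P.support, z ∈ G.puncturedBall v δ := by
      intro z hz
      refine ⟨?_, fun h => hvP (h ▸ hz)⟩
      calc G.dist v z ≤ (Walk.cons hva (P.takeUntil z hz)).length := dist_le _
        _ ≤ (Walk.cons hva P).length := by simp [P.length_takeUntil_le_length hz]
        _ = G.dist v u := hlen
        _ ≤ δ := hu.1
    exact ⟨⟨a, hmem a P.start_mem_support⟩, hva, (P.induce _ hmem).reachable⟩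

theorem reachable_induce_puncturedBall_of_walk (hδ : 1 ≤ δ)
    (hcyc : ∀ c : G.Walk v v, c.IsCycle → c.IsChordless → c.length ≤ 2 * δ)
    {a b : G.puncturedBall v δ} (ha : G.Adj v a) (hb : G.Adj v b) (W : G.Walk a b)
    (hW : v ∉ W.support) : (G.induce (G.puncturedBall v δ)).Reachable a b := by
  classical
  induction hn : W.length using Nat.strong_induction_on generalizing a b W with
  | _ n ih =>
  obtain ⟨P, hP, hPc, hPW, hPsub⟩ := W.exists_isPath_isChordless
  have hvP : v ∉ P.support := fun h => hW (hPsub h)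
  by_cases hsplit : ∃ p ∈ P.support, p ≠ a ∧ p ≠ b ∧ G.Adj v p
  · obtain ⟨p, hp, hpa, hpb, hvp⟩ := hsplit
    let p' : G.puncturedBall v δ := ⟨p, mem_puncturedBall_of_adj hδ hvp⟩
    have h₁ := P.length_takeUntil_lt_length hp hpb
    have h₂ := P.length_dropUntil_lt_length hp hpa
    exact (ih _ (by omega) (b := p') ha hvp (P.takeUntil p hp)
      (fun h => hvP (P.support_takeUntil_subset_support hp h)) rfl).trans
      (ih _ (by omega) (a := p') hvp hb (P.dropUntil p hp)
      (fun h => hvP (P.support_dropUntil_subset_support hp h)) rfl)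
  by_cases hab : a = b
  · subst hab
    rfl
  push Not at hsplit
  have hC := hcyc _ (hP.isCycle_cons_concat (Subtype.coe_ne_coe.mpr hab) hvP ha hb.symm)
    (hPc.cons_concat ha hb.symm fun x hx hvx => by
      by_contra! h
      exact hsplit x hx h.1 h.2 hvx)
  have hmem : ∀ z ∈ P.support, z ∈ G.puncturedBall v δ := by
    intro z hz
    have := Walk.two_mul_dist_le_length _
      (by simp [hz] : z ∈ (Walk.cons ha (P.concat hb.symm)).support)
    simp only [Walk.length_cons, Walk.length_concat] at hC this
    exact ⟨(by omega : G.dist v z ≤ δ), fun h => hvP (h ▸ hz)⟩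
  exact (P.induce _ hmem).reachable

end SimpleGraph

theorem deltaCritical_imp_cut_general {V : Type*}
    (G : SimpleGraph V) (hconn : G.Connected)
    (cmax δ : ℕ) (hδ : 1 ≤ δ)
    (hcmax : ∀ (v : V) (c : G.Walk v v), IsChordlessCycle G c → c.length ≤ cmax)
    (hhalf : cmax ≤ 2 * δ) (v : V)
    (hnoncrit : (G.induce ({v}ᶜ : Set V)).Connected) :
    DeltaNoncritical G δ v := by
  have hcyc : ∀ c : G.Walk v v, c.IsCycle → c.IsChordless → c.length ≤ 2 * δ :=
    fun c hc hch => (hcmax v c ⟨hc, fun _ _ hx hy hxy => hch.mem_edges hx hy hxy⟩).trans hhalf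
  have hnbrs (a b : G.puncturedBall v δ) (ha : G.Adj v a) (hb : G.Adj v b) :
      (G.induce (G.puncturedBall v δ)).Reachable a b := by
    obtain ⟨W, hW⟩ :=
      (hnoncrit.preconnected ⟨a, ha.ne'⟩ ⟨b, hb.ne'⟩).exists_walk_of_induce
    exact SimpleGraph.reachable_induce_puncturedBall_of_walk hδ hcyc ha hb W fun h => hW v h rfl
  obtain ⟨⟨u, hu⟩⟩ := hnoncrit.nonempty
  have : Nontrivial V := ⟨u, v, hu⟩
  obtain ⟨a₀, ha₀⟩ := hconn.preconnected.exists_adj_of_nontrivial v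
  show (G.induce (G.puncturedBall v δ)).Connected
  refine (SimpleGraph.connected_iff_exists_forall_reachable _).mpr
    ⟨⟨a₀, SimpleGraph.mem_puncturedBall_of_adj hδ ha₀⟩, fun ⟨u, hu⟩ => ?_⟩
  obtain ⟨a, ha, hau⟩ := hconn.exists_adj_reachable_induce_puncturedBall hu
  exact (hnbrs _ a ha₀ ha).trans hau

theorem deltaCritical_imp_cut {V : Type*} [Fintype V]
    (G : SimpleGraph V) (hconn : G.Connected)
    (cmax δ : ℕ) (hδ : 1 ≤ δ)
    (hcmax : ∀ (v : V) (c : G.Walk v v), IsChordlessCycle G c → c.length ≤ cmax)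
    (hhalf : cmax ≤ 2 * δ) (v : V)
    (hnoncrit : (G.induce ({v}ᶜ : Set V)).Connected) :
    DeltaNoncritical G δ v :=
  deltaCritical_imp_cut_general G hconn cmax δ hδ hcmax hhalf v hnoncrit
end

section
/- If a finite connected graph G contains no cycles (i.e., G is a tree), then for every δ ≥ 1, every δ-hop critical vertex of G is a cut vertex of G. -/
/-!
If removing `v` leaves a tree connected, `v` is a leaf: a second neighbour `w'` of `v` would be
joined to the first one `w` by a walk avoiding `v`, so the edge `vw` would not be a bridge.
For a leaf `v`, a shortest path from `v` to any `u` of the punctured `δ`-ball starts with the edge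
`vw`, and its tail joins `w` to `u` inside the punctured ball.
-/

namespace SimpleGraph

variable {V : Type*} {G : SimpleGraph V}

lemma Walk.dist_le_length_of_mem_support {u v x : V} (p : G.Walk u v) (hx : x ∈ p.support) :
    G.dist u x ≤ p.length := by
  classical
  exact (dist_le _).trans (p.length_takeUntil_le_length hx)

lemma IsAcyclic.eq_of_adj_of_preconnected_induce_compl (hG : G.IsAcyclic) {v w w' : V}
    (hv : (G.induce {v}ᶜ).Preconnected) (hw : G.Adj v w) (hw' : G.Adj v w') : w' = w := by
  obtain ⟨r⟩ := hv ⟨w', Set.mem_compl_singleton_iff.mpr hw'.ne.symm⟩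
    ⟨w, Set.mem_compl_singleton_iff.mpr hw.ne.symm⟩
  set r' := r.map (Embedding.induce _).toHom with hr'
  have hvr' : v ∉ r'.support := by
    rw [hr', Walk.support_map, List.mem_map]
    rintro ⟨⟨x, hx⟩, -, hxv⟩
    exact hx hxv
  have hbridge := isBridge_iff_forall_walk_mem_edges.mp
    (isAcyclic_iff_forall_adj_isBridge.mp hG hw) (r'.cons hw')
  rcases List.mem_cons.mp hbridge with hedge | hedge
  · rcases Sym2.eq_iff.mp hedge with ⟨-, h⟩ | ⟨h, -⟩
    exacts [h.symm, absurd h hw'.ne]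
  · exact absurd (r'.fst_mem_support_of_mem_edges hedge) hvr'

lemma Connected.connected_induce_punctured_ball_of_forall_adj_eq (hG : G.Connected)
    {v w : V} (hw : G.Adj v w) (huniq : ∀ w', G.Adj v w' → w' = w) {δ : ℕ} (hδ : 1 ≤ δ) :
    (G.induce ({u | G.dist v u ≤ δ} \ {v})).Connected := by
  refine G.induce_connected_of_patches w ⟨by simpa [dist_eq_one_iff_adj.mpr hw] using hδ,
    hw.ne.symm⟩ fun {u} hu => ?_
  obtain ⟨p, hp, hlen⟩ := hG.exists_path_of_dist v u
  cases p with
  | nil => exact absurd rfl hu.2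
  | @cons _ c _ hvc t =>
    obtain rfl := huniq c hvc
    refine ⟨{x | x ∈ t.support}, fun x hx => ⟨?_, ?_⟩, t.start_mem_support, t.end_mem_support,
      t.connected_induce_support.preconnected _ _⟩
    · calc G.dist v x ≤ (t.cons hvc).length :=
            (t.cons hvc).dist_le_length_of_mem_support (List.mem_cons_of_mem _ hx)
        _ ≤ δ := hlen ▸ hu.1
    · rintro rfl
      exact ((Walk.cons_isPath_iff _ _).mp hp).2 hx

end SimpleGraph

open SimpleGraph

theorem tree_deltaCritical_imp_cut_general {V : Type*}
    (G : SimpleGraph V) (htree : G.IsTree) (δ : ℕ) (hδ : 1 ≤ δ)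
    (v : V) (hcrit : ¬ DeltaNoncritical G δ v) :
    ¬ (G.induce ({v}ᶜ : Set V)).Connected := by
  intro hcompl
  obtain ⟨⟨u, huv⟩⟩ := hcompl.nonempty
  obtain ⟨w, hvw⟩ : ∃ w, G.Adj v w :=
    ⟨_, (htree.connected v u).some.adj_snd (Walk.not_nil_of_ne (Ne.symm huv))⟩
  exact hcrit <| htree.connected.connected_induce_punctured_ball_of_forall_adj_eq hvw
    (fun _ hvw' => htree.isAcyclic.eq_of_adj_of_preconnected_induce_compl
      hcompl.preconnected hvw hvw') hδ

theorem tree_deltaCritical_imp_cut {V : Type*} [Fintype V]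
    (G : SimpleGraph V) (htree : G.IsTree) (δ : ℕ) (hδ : 1 ≤ δ)
    (v : V) (hcrit : ¬ DeltaNoncritical G δ v) :
    ¬ (G.induce ({v}ᶜ : Set V)).Connected :=
  tree_deltaCritical_imp_cut_general G htree δ hδ v hcrit
end
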